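/- Let (Ω, 𝓕, P) be a probability space, K ≥ 1, and let Z : Ω → Fin K, X, Y, Y₀, Y₁ : Ω → Bool be measurable and satisfy consistency. Fix i : Bool and set Y_i := if i then Y₁ else Y₀. If Z and Y_i are independent (IndepFun) and z : Fin K satisfies P(Z = z) > 0, then for every y : Bool: P(Y_i = y) ≤ P[{Y = y} ∩ {X = i} | {Z = z}] + P[{X = !i} | {Z = z}]. -/

import Mathlib

open MeasureTheory ProbabilityTheory

/-- Lemma 3 of the paper: if the instrument `Z` is independent of the potential outcome
`Y(x_i)`, then the "natural bounds" marginal inequality (marg) holds. -/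
theorem iv_marginal_bound
    {Ω : Type*} [MeasurableSpace Ω] (P : Measure Ω) [IsProbabilityMeasure P]
    {K : ℕ} (hK : 1 ≤ K)
    (Z : Ω → Fin K) (X Y Y₀ Y₁ : Ω → Bool)
    (hZ : Measurable Z) (hX : Measurable X) (hY : Measurable Y)
    (hY₀ : Measurable Y₀) (hY₁ : Measurable Y₁)
    (hcons : ∀ᵐ ω ∂P, Y ω = if X ω then Y₁ ω else Y₀ ω)
    (i : Bool)
    (hind : IndepFun Z (fun ω => if i then Y₁ ω else Y₀ ω) P)
    (z : Fin K) (hz : 0 < P {ω | Z ω = z}) :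
    ∀ y : Bool,
      P {ω | (if i then Y₁ ω else Y₀ ω) = y}
        ≤ P[{ω | Y ω = y} ∩ {ω | X ω = i} | {ω | Z ω = z}]
          + P[{ω | X ω = !i} | {ω | Z ω = z}] := by
  intro y
  set Yi : Ω → Bool := fun ω => if i then Y₁ ω else Y₀ ω with hYi
  have hYim : Measurable Yi := by cases i <;> simpa [hYi]
  set s : Set Ω := {ω | Z ω = z} with hs
  have hsm : MeasurableSet s := hZ (measurableSet_singleton z)
  have hs0 : P s ≠ 0 := hz.ne'
  have hst : P s ≠ ⊤ := measure_ne_top _ _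
  -- independence: conditional prob of {Yi = y} given s equals unconditional
  have hindep : P (s ∩ {ω | Yi ω = y}) = P s * P {ω | Yi ω = y} := by
    have := hind.measure_inter_preimage_eq_mul {z} {y} (measurableSet_singleton z)
      (measurableSet_singleton y)
    simpa [Set.preimage, hs] using this
  have hkey : P {ω | Yi ω = y} = P[{ω | Yi ω = y} | s] := by
    rw [cond_apply hsm, hindep, ← mul_assoc, ENNReal.inv_mul_cancel hs0 hst, one_mul]
  rw [hkey]
  -- null set where consistency fails
  set N : Set Ω := {ω | ¬ (Y ω = if X ω then Y₁ ω else Y₀ ω)} with hN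
  have hPN : P N = 0 := by
    simpa [hN] using ae_iff.mp hcons
  have hQN : P[N | s] = 0 := by
    rw [cond_apply hsm]
    have : P (s ∩ N) = 0 := measure_inter_null_of_null_right _ hPN
    simp [this]
  -- inclusion
  have hsub : {ω | Yi ω = y} ⊆ ({ω | Y ω = y} ∩ {ω | X ω = i}) ∪ {ω | X ω = !i} ∪ N := by
    intro ω hω
    by_cases hXi : X ω = i
    · by_cases hωN : ω ∈ N
      · exact Or.inr hωN
      · left; left
        constructor
        · have hYω : Y ω = if X ω then Y₁ ω else Y₀ ω := not_not.mp hωN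
          have : Y ω = Yi ω := by rw [hYω, hXi, hYi]
          simpa [this] using hω
        · exact hXi
    · left; right
      cases i <;> cases hXb : X ω <;> simp_all
  calc P[{ω | Yi ω = y} | s]
      ≤ P[({ω | Y ω = y} ∩ {ω | X ω = i}) ∪ {ω | X ω = !i} ∪ N | s] :=
        measure_mono hsub
    _ ≤ P[({ω | Y ω = y} ∩ {ω | X ω = i}) ∪ {ω | X ω = !i} | s] + P[N | s] :=
        measure_union_le _ _
    _ ≤ (P[{ω | Y ω = y} ∩ {ω | X ω = i} | s] + P[{ω | X ω = !i} | s]) + 0 := by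
        rw [hQN]
        exact add_le_add (measure_union_le (μ := ProbabilityTheory.cond P s) _ _) le_rfl
    _ = _ := by rw [add_zero]
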